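/- arXiv:1701.07735 — 10 statements merged into one kernel-verified Lean document; each statement's English description precedes it below -/
import Mathlib

section
/- The annihilator of a finitely generated projective module over a commutative ring is generated by an idempotent element. -/
/-!
Let `T ⊆ R` be the trace ideal of `M`, generated by the values `φ m` of all linear forms
`φ : M → R`. The dual basis lemma for a projective module gives `T • M = M`, so since `M` is
finitely generated, Nakayama's lemma yields `t ∈ T` acting as the identity on `M`. Every element
of `Ann M` kills `T`, hence `e = 1 - t` lies in `Ann M`, satisfies `a = a * e` for all
`a ∈ Ann M`, and in particular is idempotent.
-/

namespace Module

variable {R M : Type*} [CommRing R] [AddCommGroup M] [Module R M]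

variable (R M) in
def traceIdeal : Ideal R :=
  ⨆ φ : Dual R M, LinearMap.range φ

theorem apply_mem_traceIdeal (φ : Dual R M) (m : M) : φ m ∈ traceIdeal R M :=
  Ideal.mem_iSup_of_mem φ (LinearMap.mem_range_self φ m)

theorem traceIdeal_le_annihilator_annihilator :
    traceIdeal R M ≤ (annihilator R M).annihilator :=
  iSup_le fun φ => by
    rintro _ ⟨m, rfl⟩
    refine Submodule.mem_annihilator.2 fun a ha => ?_
    rw [smul_eq_mul, mul_comm, ← smul_eq_mul, ← map_smul, mem_annihilator.1 ha, map_zero]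

theorem traceIdeal_smul_top [Projective R M] : traceIdeal R M • (⊤ : Submodule R M) = ⊤ := by
  obtain ⟨s, hs⟩ := projective_def'.1 ‹Projective R M›
  refine eq_top_iff.2 fun m _ => ?_
  have hm : (s m).sum (fun x c => c • x) = m := LinearMap.congr_fun hs m
  rw [← hm]
  exact Submodule.finsuppSum_mem _ _ _ _ fun x _ =>
    Submodule.smul_mem_smul (apply_mem_traceIdeal ((Finsupp.lapply x).comp s) m) trivial

theorem exists_isIdempotentElem_annihilator_eq_span [Module.Finite R M] {I : Ideal R}
    (hI : I • (⊤ : Submodule R M) = ⊤) (hIann : I ≤ (annihilator R M).annihilator) :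
    ∃ e : R, IsIdempotentElem e ∧ annihilator R M = Ideal.span {e} := by
  obtain ⟨t, htI, ht⟩ :=
    Submodule.exists_mem_and_smul_eq_self_of_fg_of_le_smul I ⊤ Module.Finite.fg_top hI.ge
  have he : 1 - t ∈ annihilator R M :=
    mem_annihilator.2 fun m => by rw [sub_smul, one_smul, ht m trivial, sub_self]
  have hfix : ∀ a ∈ annihilator R M, a * (1 - t) = a := fun a ha => by
    have hat : t * a = 0 := Submodule.mem_annihilator.1 (hIann htI) a ha
    linear_combination -hat
  refine ⟨1 - t, hfix _ he, le_antisymm (fun a ha => ?_) ?_⟩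
  · exact Ideal.mem_span_singleton'.2 ⟨a, hfix a ha⟩
  · exact Ideal.span_singleton_le_iff_mem _ |>.2 he

end Module

/-- The annihilator of a finitely generated projective module over a commutative
ring is generated by an idempotent element. -/
theorem annihilator_eq_span_idempotent_of_fg_projective
    (R M : Type*) [CommRing R] [AddCommGroup M] [Module R M]
    [Module.Finite R M] [Module.Projective R M] :
    ∃ e : R, IsIdempotentElem e ∧ Module.annihilator R M = Ideal.span {e} :=
  Module.exists_isIdempotentElem_annihilator_eq_span Module.traceIdeal_smul_top
    Module.traceIdeal_le_annihilator_annihilator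
end

section
/- Let (R, m) be a commutative local ring and M a flat R-module. If S is a subset of M whose image in M/mM is linearly independent over the residue field R/m, then S is linearly independent over R. -/
open scoped TensorProduct

theorem linearIndependent_quotient_smul_top_iff_tmul {R M ι : Type*} [CommRing R]
    [AddCommGroup M] [Module R M] (I : Ideal R) (v : ι → M) :
    LinearIndependent (R ⧸ I)
        (fun i ↦ (Submodule.Quotient.mk (v i) : M ⧸ I • (⊤ : Submodule R M))) ↔
      LinearIndependent (R ⧸ I) (TensorProduct.mk R (R ⧸ I) M 1 ∘ v) := by
  let e : (R ⧸ I) ⊗[R] M ≃ₗ[R ⧸ I] M ⧸ I • (⊤ : Submodule R M) :=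
    (TensorProduct.quotTensorEquivQuotSMul M I).extendScalarsOfSurjective Ideal.Quotient.mk_surjective
  rw [← e.toLinearMap.linearIndependent_iff_of_injOn e.injective.injOn]
  congr! 1
  ext i
  simp [e]

/-- Over a local ring, a subset of a flat module whose image in `M/mM` is linearly
independent over the residue field is linearly independent over `R`. -/
theorem linearIndependent_of_flat_of_quotient_linearIndependent
    (R M : Type*) [CommRing R] [IsLocalRing R] [AddCommGroup M] [Module R M]
    [Module.Flat R M] (S : Set M)
    (h : LinearIndependent (R ⧸ IsLocalRing.maximalIdeal R)
      (fun s : S => (Submodule.Quotient.mk (s : M) :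
        M ⧸ (IsLocalRing.maximalIdeal R) • (⊤ : Submodule R M)))) :
    LinearIndependent R ((↑) : S → M) :=
  Module.IsLocalRing.linearIndependent_of_flat _
    ((linearIndependent_quotient_smul_top_iff_tmul _ _).1 h)
end

section
/- Let (R, m) be a commutative local ring and M a flat R-module. Then there exists a free R-submodule F of M such that M = F + mM. -/
universe u v

section helper
variable {R : Type u} {M : Type v} [CommRing R] [AddCommGroup M] [Module R M]

/-- Flatness transfers to the `ULift` of the ring. -/
lemma flat_ulift_ring [Module.Flat R M] : Module.Flat (ULift.{v} R) M := by
  letI : Algebra (ULift.{v} R) R := (ULift.ringEquiv : ULift.{v} R ≃+* R).toRingHom.toAlgebra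
  haveI : IsScalarTower (ULift.{v} R) R M := ⟨fun a r m => by
    change (a.down * r) • m = a.down • r • m
    rw [mul_smul]⟩
  haveI : Module.Flat (ULift.{v} R) R := by
    refine Module.Flat.of_linearEquiv (M := ULift.{v} R) ?_
    exact { toFun := ULift.up, invFun := ULift.down,
            map_add' := fun _ _ => rfl, map_smul' := fun _ _ => rfl,
            left_inv := fun _ => rfl, right_inv := fun _ => rfl }
  exact @Module.Flat.trans (ULift.{v} R) R M _ _ _ _ _ _ ‹_› ‹_› ‹_›
end helper

lemma ulift_down_sum {M : Type v} [AddCommMonoid M] {ι : Type*} (s : Finset ι)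
    (g : ι → ULift.{u} M) : (∑ i ∈ s, g i).down = ∑ i ∈ s, (g i).down :=
  map_sum (⟨⟨(ULift.down : ULift.{u} M → M), rfl⟩, fun _ _ => rfl⟩ : ULift.{u} M →+ M) g s

section helper2
variable {R : Type u} {M : Type v} [CommRing R] [AddCommGroup M] [Module R M]

/-- Universe-polymorphic version of the equational criterion for flatness
(forward direction), for families indexed by `Fin n`. -/
lemma trivialRel_poly [Module.Flat R M] {n : ℕ} {f : Fin n → R} {x : Fin n → M}
    (h : ∑ i, f i • x i = 0) :
    ∃ (κ : Type (max u v)) (_ : Fintype κ) (a : Fin n → κ → R) (y : κ → M),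
      (∀ i, x i = ∑ j, a i j • y j) ∧ ∀ j, ∑ i, f i * a i j = 0 := by
  haveI : Module.Flat (ULift.{v} R) M := flat_ulift_ring
  haveI : Module.Flat (ULift.{v} R) (ULift.{u} M) := inferInstance
  set R' := ULift.{v} R
  set M' := ULift.{u} M
  let f' : ULift.{max u v} (Fin n) → R' := fun i => ULift.up (f i.down)
  let x' : ULift.{max u v} (Fin n) → M' := fun i => ULift.up (x i.down)
  have h' : ∑ i, f' i • x' i = 0 := by
    have : ∀ i : ULift.{max u v} (Fin n), f' i • x' i = ULift.up (f i.down • x i.down) := by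
      intro i; rfl
    apply ULift.down_injective
    rw [ulift_down_sum]
    simp only [this]
    rw [← Equiv.sum_comp (Equiv.ulift.symm : Fin n ≃ ULift.{max u v} (Fin n))
      (fun i => (ULift.up (f i.down • x i.down) : M').down)]
    simpa using h
  obtain ⟨k, a, y, hxy, hfa⟩ := Module.Flat.isTrivialRelation_of_sum_smul_eq_zero h'
  refine ⟨ULift.{max u v} (Fin k), inferInstance, fun i j => (a (ULift.up i) j.down).down,
    fun j => (y j.down).down, fun i => ?_, fun j => ?_⟩
  · have := congrArg ULift.down (hxy (ULift.up i))
    rw [ulift_down_sum] at this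
    rw [← Equiv.sum_comp (Equiv.ulift.symm : Fin k ≃ ULift.{max u v} (Fin k))]
    exact this.trans (Finset.sum_congr rfl fun j _ => rfl)
  · have := congrArg ULift.down (hfa j.down)
    rw [ulift_down_sum] at this
    rw [← Equiv.sum_comp (Equiv.ulift.symm : Fin n ≃ ULift.{max u v} (Fin n))] at this
    exact (Finset.sum_congr rfl fun i _ => rfl).trans this
end helper2

section key
variable {R : Type u} {M : Type v} [CommRing R] [IsLocalRing R] [AddCommGroup M]
  [Module R M] [Module.Flat R M]

open IsLocalRing

/-- Over a local ring, a finite family in a flat module whose relations all have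
coefficients in the maximal ideal (i.e. whose images mod `mM` are independent)
is linearly independent. -/
lemma key_indep : ∀ (n : ℕ) (x : Fin n → M),
    (∀ c : Fin n → R, (∑ i, c i • x i) ∈ (maximalIdeal R • ⊤ : Submodule R M) →
      ∀ i, c i ∈ maximalIdeal R) →
    ∀ c : Fin n → R, ∑ i, c i • x i = 0 → ∀ i, c i = 0 := by
  intro n
  induction n with
  | zero => exact fun x _ c _ i => i.elim0
  | succ n ih =>
    intro x hx c hc
    obtain ⟨κ, _, a, y, hxy, hca⟩ := trivialRel_poly hc
    have hunit : ∃ j, IsUnit (a (Fin.last n) j) := by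
      by_contra hcon
      push_neg at hcon
      have hmem : x (Fin.last n) ∈ (maximalIdeal R • ⊤ : Submodule R M) := by
        rw [hxy (Fin.last n)]
        exact Submodule.sum_mem _ fun j _ =>
          Submodule.smul_mem_smul ((mem_maximalIdeal _).mpr (hcon j)) trivial
      have h1 : (Pi.single (Fin.last n) (1 : R) : Fin (n+1) → R) (Fin.last n) ∈ maximalIdeal R := by
        refine hx (Pi.single (Fin.last n) (1 : R)) ?_ (Fin.last n)
        have : ∑ i, (Pi.single (Fin.last n) (1 : R) : Fin (n+1) → R) i • x i = x (Fin.last n) := by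
          rw [Finset.sum_eq_single (Fin.last n)]
          · simp
          · intro b _ hb; simp [Pi.single_eq_of_ne hb]
          · simp
        rwa [this]
      rw [Pi.single_eq_same] at h1
      exact (maximalIdeal.isMaximal R).ne_top (Ideal.eq_top_of_isUnit_mem _ h1 isUnit_one)
    obtain ⟨j₀, hu⟩ := hunit
    set d : Fin n → R := fun i => a i.castSucc j₀ * (↑hu.unit⁻¹ : R) with hd
    have hclast : c (Fin.last n) = -∑ i : Fin n, c i.castSucc * d i := by
      have h0 := hca j₀
      rw [Fin.sum_univ_castSucc] at h0
      have h1 : c (Fin.last n) * a (Fin.last n) j₀ =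
          -∑ i : Fin n, c i.castSucc * a i.castSucc j₀ := by linear_combination h0
      calc c (Fin.last n) = c (Fin.last n) * ((↑hu.unit : R) * (↑hu.unit⁻¹ : R)) := by
            rw [Units.mul_inv]; ring
        _ = (c (Fin.last n) * a (Fin.last n) j₀) * (↑hu.unit⁻¹ : R) := by
            rw [IsUnit.unit_spec]; ring
        _ = (-∑ i : Fin n, c i.castSucc * a i.castSucc j₀) * (↑hu.unit⁻¹ : R) := by rw [h1]
        _ = -∑ i : Fin n, c i.castSucc * d i := by
            rw [neg_mul, Finset.sum_mul]
            simp only [hd, mul_assoc]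
    set x' : Fin n → M := fun i => x i.castSucc - d i • x (Fin.last n) with hx'def
    have key : ∀ b : Fin n → R,
        ∑ i, b i • x' i =
          ∑ i : Fin (n+1),
            (Fin.snoc b (-(∑ i, b i * d i)) : Fin (n+1) → R) i • x i := by
      intro b
      rw [Fin.sum_univ_castSucc]
      simp only [Fin.snoc_castSucc, Fin.snoc_last, hx'def, smul_sub, smul_smul,
        Finset.sum_sub_distrib, neg_smul, Finset.sum_smul]
      abel
    have hx'indep : ∀ b : Fin n → R,
        (∑ i, b i • x' i) ∈ (maximalIdeal R • ⊤ : Submodule R M) →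
        ∀ i, b i ∈ maximalIdeal R := by
      intro b hb i
      rw [key] at hb
      have := hx _ hb i.castSucc
      rwa [Fin.snoc_castSucc] at this
    have hrel : ∑ i, c (Fin.castSucc i) • x' i = 0 := by
      rw [key]
      have heq : (Fin.snoc (fun i : Fin n => c i.castSucc)
          (-(∑ i, c i.castSucc * d i)) : Fin (n+1) → R) = c := by
        funext i
        refine Fin.lastCases ?_ (fun j => ?_) i
        · rw [Fin.snoc_last, ← hclast]
        · rw [Fin.snoc_castSucc]
      rw [heq]; exact hc
    have hzero := ih x' hx'indep _ hrel
    intro i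
    refine Fin.lastCases ?_ hzero i
    rw [hclast]
    simp [hzero]
end key

open IsLocalRing in
/-- Over a local ring `(R, m)`, every flat module `M` has a free submodule `F`
with `M = F + mM`. -/
theorem exists_free_submodule_sup_smul_top_of_flat
    (R M : Type*) [CommRing R] [IsLocalRing R] [AddCommGroup M] [Module R M]
    [Module.Flat R M] :
    ∃ F : Submodule R M, Module.Free R F ∧
      F ⊔ (IsLocalRing.maximalIdeal R) • (⊤ : Submodule R M) = ⊤ := by
  classical
  set m := maximalIdeal R with hm
  set p : Submodule R M := m • ⊤ with hp
  haveI : m.IsMaximal := maximalIdeal.isMaximal R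
  letI : Field (R ⧸ m) := Ideal.Quotient.field m
  let b := Module.Free.chooseBasis (R ⧸ m) (M ⧸ p)
  set ι := Module.Free.ChooseBasisIndex (R ⧸ m) (M ⧸ p)
  choose f hf using fun i : ι => Submodule.Quotient.mk_surjective p (b i)
  have li : LinearIndependent R f := by
    rw [linearIndependent_iff']
    intro s g hsum i hi
    set n := s.card with hn
    set e : Fin n ≃ s := s.equivFin.symm with he
    have hxcond : ∀ c : Fin n → R,
        (∑ j, c j • f (e j)) ∈ p → ∀ j, c j ∈ m := by
      intro c hcp j
      have hq : ∑ j, (Ideal.Quotient.mk m (c j)) • b (e j) = 0 := by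
        have h0 : p.mkQ (∑ j, c j • f (e j)) = 0 := by
          rw [Submodule.mkQ_apply, Submodule.Quotient.mk_eq_zero]; exact hcp
        rw [map_sum] at h0
        simp only [map_smul, Submodule.mkQ_apply, hf] at h0
        rw [← h0]
        exact Finset.sum_congr rfl fun j _ => by rw [← hf (e j)]; rfl
      have hbi : LinearIndependent (R ⧸ m) (fun j : Fin n => b (e j)) :=
        b.linearIndependent.comp _ (Subtype.val_injective.comp e.injective)
      have := Fintype.linearIndependent_iff.mp hbi (fun j => Ideal.Quotient.mk m (c j)) hq j
      rwa [← Ideal.Quotient.eq_zero_iff_mem]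
    have hsum' : ∑ j : Fin n, g (e j) • f (e j) = 0 := by
      rw [show ∑ j : Fin n, g (e j) • f (e j) = ∑ a : s, g a • f a from
        Equiv.sum_comp e (fun a : s => g (a : ι) • f (a : ι)),
        Finset.sum_coe_sort s (fun i => g i • f i)]
      exact hsum
    have hz := key_indep n (fun j => f (e j)) hxcond (fun j => g (e j)) hsum'
    have := hz (e.symm ⟨i, hi⟩)
    simpa using this
  refine ⟨Submodule.span R (Set.range f), Module.Free.of_basis (Module.Basis.span li), ?_⟩
  have hmap : Submodule.map p.mkQ (Submodule.span R (Set.range f)) = ⊤ := by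
    rw [Submodule.map_span, ← Set.range_comp]
    have hcomp : (p.mkQ ∘ f) = fun i => b i := by
      funext i; simp [hf]
    rw [hcomp]
    rw [show (Set.range fun i => b i) = Set.range b from rfl,
      ← Submodule.restrictScalars_span R (R ⧸ m) Ideal.Quotient.mk_surjective,
      b.span_eq]
    rfl
  have := congrArg (Submodule.comap p.mkQ) hmap
  rwa [Submodule.comap_map_mkQ, Submodule.comap_top, sup_comm] at this
end

section
/- Let (R, m) be a commutative local ring with m nilpotent, and let M be a flat R-module. Then M is free. -/
open IsLocalRing TensorProduct Function

section Aux

variable {R : Type*} [CommRing R] [IsLocalRing R]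
variable {M : Type*} [AddCommGroup M] [Module R M]

local notation "k" => ResidueField R
local notation "𝔪" => maximalIdeal R

/-- Nakayama for nilpotent maximal ideal: no finiteness needed. -/
lemma nilpotent_nakayama_aux (h : IsNilpotent (maximalIdeal R)) (N : Submodule R M)
    (hN : N ⊔ 𝔪 • (⊤ : Submodule R M) = ⊤) : N = ⊤ := by
  obtain ⟨n, hn⟩ := h
  have key : ∀ j, (⊤ : Submodule R M) ≤ N ⊔ (𝔪 ^ j) • ⊤ := by
    intro j
    induction j with
    | zero => simp [Ideal.one_eq_top, Submodule.top_smul]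
    | succ j ih =>
      have h1 : (𝔪 : Ideal R) • (⊤ : Submodule R M) ≤ N ⊔ (𝔪 ^ (j + 1)) • ⊤ := by
        calc (𝔪 : Ideal R) • (⊤ : Submodule R M)
            ≤ 𝔪 • (N ⊔ (𝔪 ^ j) • ⊤) := Submodule.smul_mono le_rfl ih
          _ = 𝔪 • N ⊔ 𝔪 • ((𝔪 ^ j) • ⊤) := Submodule.smul_sup ..
          _ ≤ N ⊔ (𝔪 ^ (j + 1)) • ⊤ := by
              refine sup_le_sup Submodule.smul_le_right ?_
              rw [← Submodule.smul_assoc, smul_eq_mul, ← pow_succ']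
      calc (⊤ : Submodule R M) = N ⊔ 𝔪 • ⊤ := hN.symm
        _ ≤ N ⊔ (N ⊔ (𝔪 ^ (j + 1)) • ⊤) := sup_le_sup le_rfl h1
        _ = N ⊔ (𝔪 ^ (j + 1)) • ⊤ := by rw [← sup_assoc, sup_idem]
  have h2 := key n
  rw [hn] at h2
  refine le_antisymm le_top (h2.trans ?_)
  simp [Ideal.zero_eq_bot]

lemma sup_eq_top_of_map_mk_eq_top_aux (N : Submodule R M)
    (hN : N.map (TensorProduct.mk R k M 1) = ⊤) :
    N ⊔ 𝔪 • (⊤ : Submodule R M) = ⊤ := by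
  letI : Module k (M ⧸ (𝔪 • ⊤ : Submodule R M)) :=
    inferInstanceAs (Module (R ⧸ 𝔪) (M ⧸ 𝔪 • (⊤ : Submodule R M)))
  letI : IsScalarTower R k (M ⧸ (𝔪 • ⊤ : Submodule R M)) :=
    inferInstanceAs (IsScalarTower R (R ⧸ 𝔪) (M ⧸ 𝔪 • (⊤ : Submodule R M)))
  let f := AlgebraTensorModule.lift (((LinearMap.ringLmapEquivSelf k k _).symm
    (Submodule.mkQ (𝔪 • ⊤ : Submodule R M))).restrictScalars R)
  have hfc : f.comp (TensorProduct.mk R k M 1) = Submodule.mkQ (𝔪 • ⊤) := by ext; simp [f]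
  apply_fun Submodule.map f at hN
  rw [← Submodule.map_comp, hfc, Submodule.map_top] at hN
  have hf : Function.Surjective f := by
    intro x; obtain ⟨x, rfl⟩ := Submodule.mkQ_surjective _ x
    rw [← hfc, LinearMap.comp_apply]; exact ⟨_, rfl⟩
  rw [LinearMap.range_eq_top.2 hf] at hN
  have h2 := congrArg (Submodule.comap (Submodule.mkQ (𝔪 • ⊤ : Submodule R M))) hN
  rwa [Submodule.comap_map_eq, Submodule.comap_top, Submodule.ker_mkQ] at h2

end Aux

set_option maxHeartbeats 1000000 in
set_option synthInstance.maxHeartbeats 200000 in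
/-- Over a local ring with nilpotent maximal ideal, every flat module is free. -/
theorem free_of_flat_of_nilpotent_maximalIdeal
    (R M : Type*) [CommRing R] [IsLocalRing R] [AddCommGroup M] [Module R M]
    [Module.Flat R M] (h : IsNilpotent (IsLocalRing.maximalIdeal R)) :
    Module.Free R M := by
  let I := Module.Free.ChooseBasisIndex (ResidueField R) (ResidueField R ⊗[R] M)
  let b : Module.Basis I (ResidueField R) (ResidueField R ⊗[R] M) :=
    Module.Free.chooseBasis (ResidueField R) (ResidueField R ⊗[R] M)
  choose f hf using TensorProduct.mk_surjective R M (ResidueField R) Ideal.Quotient.mk_surjective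
  let i := Finsupp.linearCombination R (f ∘ b)
  have hi : Surjective i := by
    rw [← LinearMap.range_eq_top, Finsupp.range_linearCombination]
    refine nilpotent_nakayama_aux h _ (sup_eq_top_of_map_mk_eq_top_aux _ ?_)
    rw [Submodule.map_span, ← Submodule.restrictScalars_span R (ResidueField R)
      Ideal.Quotient.mk_surjective,
      Submodule.restrictScalars_eq_top_iff, ← b.span_eq, ← Set.range_comp]
    congr 2
    ext x
    simp only [Function.comp_def, mk_apply, hf]
  -- `k ⊗ i` is bijective since it maps a basis to a basis.
  let bF : Module.Basis I (ResidueField R) (ResidueField R ⊗[R] (I →₀ R)) :=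
    (Finsupp.basisSingleOne).baseChange (ResidueField R)
  have key : i.baseChange (ResidueField R) = (bF.equiv b (Equiv.refl I)).toLinearMap := by
    refine bF.ext fun j => ?_
    rw [LinearEquiv.coe_coe, Module.Basis.equiv_apply, Equiv.refl_apply]
    simp only [bF, Module.Basis.baseChange_apply, Finsupp.coe_basisSingleOne,
      LinearMap.baseChange_tmul]
    simp only [i, Finsupp.linearCombination_single, one_smul, Function.comp_apply]
    exact hf (b j)
  have hi' : Function.Bijective (i.baseChange (ResidueField R)) := by
    rw [key]; exact (bF.equiv b (Equiv.refl I)).bijective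
  refine Module.Free.of_equiv (LinearEquiv.ofBijective i ⟨?_, hi⟩)
  clear_value bF i b I
  clear hf key
  have hz : ∀ x : ResidueField R ⊗[R] LinearMap.ker i, x = 0 := by
    intro x
    refine lTensor_injective_of_exact_of_exact_of_rTensor_injective
      (N₁ := LinearMap.ker i) (N₂ := I →₀ R) (N₃ := M)
      (f₁ := (IsLocalRing.maximalIdeal R).subtype)
      (f₂ := Submodule.mkQ (IsLocalRing.maximalIdeal R))
      (g₁ := (LinearMap.ker i).subtype) (g₂ := i)
      (LinearMap.exact_subtype_mkQ _) (Submodule.mkQ_surjective _)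
      (LinearMap.exact_subtype_ker_map i) hi
      (Module.Flat.rTensor_preserves_injective_linearMap _ Subtype.val_injective) ?_ ?_
    · exact Module.Flat.lTensor_preserves_injective_linearMap (R := R) (M := R)
        (N := LinearMap.ker i) (P := I →₀ R) _ Subtype.val_injective
    · apply hi'.injective
      rw [LinearMap.baseChange_eq_ltensor]
      erw [← LinearMap.comp_apply (i.lTensor (ResidueField R)), ← LinearMap.lTensor_comp]
      rw [(LinearMap.exact_subtype_ker_map i).linearMap_comp_eq_zero]
      simp only [LinearMap.lTensor_zero, LinearMap.zero_apply, map_zero]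
      erw [map_zero]
      rfl
  haveI hsub : Subsingleton (ResidueField R ⊗[R] LinearMap.ker i) :=
    subsingleton_of_forall_eq 0 fun x => hz x
  rw [← LinearMap.ker_eq_bot]
  have hbt : (⊥ : Submodule R (LinearMap.ker i)) = ⊤ :=
    nilpotent_nakayama_aux h ⊥ (by
      simpa using sup_eq_top_of_map_mk_eq_top_aux (M := LinearMap.ker i) ⊥
        (Subsingleton.elim _ _))
  refine (Submodule.eq_bot_iff _).mpr fun x hx => ?_
  have hx0 : (⟨x, hx⟩ : LinearMap.ker i) ∈ (⊥ : Submodule R (LinearMap.ker i)) := by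
    rw [hbt]; exact Submodule.mem_top
  simpa [Submodule.mem_bot, Subtype.ext_iff] using hx0
end

section
/- The annihilator of a finitely generated flat module over a commutative ring is an idempotent ideal. -/
/-!
Let `a ∈ I = Ann M`. Since `a • x = 0` for every `x : M`, the equational criterion for flatness
writes each `x` as a combination of elements of `M` with coefficients killed by `a`, so
`M = Ann(a) • M`. As `M` is finitely generated, Nakayama gives `r ∈ I` with `r ≡ 1` modulo
`Ann(a)`, whence `a = a * r ∈ I * I`.
-/

open Submodule

namespace Module

variable {R M : Type*} [CommRing R] [AddCommGroup M] [Module R M]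

theorem Flat.mem_annihilator_smul_top_of_smul_eq_zero [Flat R M] {a : R} {x : M}
    (hax : a • x = 0) : x ∈ (R ∙ a).annihilator • (⊤ : Submodule R M) := by
  obtain ⟨k, c, y, hx, hc⟩ := Flat.isTrivialRelation_of_sum_smul_eq_zero
    (f := fun _ : Unit ↦ a) (x := fun _ ↦ x) (by simpa using hax)
  rw [show x = _ from hx ()]
  refine sum_mem fun j _ ↦ smul_mem_smul ?_ mem_top
  rw [mem_annihilator_span_singleton, smul_eq_mul, mul_comm]
  simpa using hc j

theorem Flat.top_le_annihilator_smul_top_of_mem_annihilator [Flat R M] {a : R}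
    (ha : a ∈ annihilator R M) : (⊤ : Submodule R M) ≤ (R ∙ a).annihilator • ⊤ :=
  fun x _ ↦ mem_annihilator_smul_top_of_smul_eq_zero (mem_annihilator.mp ha x)

theorem exists_mem_annihilator_sub_one_mem_of_top_le_smul [Module.Finite R M] {J : Ideal R}
    (hJ : (⊤ : Submodule R M) ≤ J • ⊤) : ∃ r ∈ annihilator R M, r - 1 ∈ J := by
  obtain ⟨r, hrJ, hr⟩ := exists_sub_one_mem_and_smul_eq_zero_of_fg_of_le_smul J ⊤ Finite.fg_top hJ
  exact ⟨r, mem_annihilator.mpr fun x ↦ hr x mem_top, hrJ⟩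

end Module

/-- The annihilator of a finitely generated flat module is an idempotent ideal. -/
theorem annihilator_idempotent_of_fg_flat
    (R M : Type*) [CommRing R] [AddCommGroup M] [Module R M]
    [Module.Finite R M] [Module.Flat R M] :
    Module.annihilator R M * Module.annihilator R M = Module.annihilator R M := by
  refine le_antisymm Ideal.mul_le_left fun a ha ↦ ?_
  obtain ⟨r, hr, hr_sub_one⟩ := Module.exists_mem_annihilator_sub_one_mem_of_top_le_smul
    (Module.Flat.top_le_annihilator_smul_top_of_mem_annihilator ha)
  have har : a * r = a := by
    rw [Submodule.mem_annihilator_span_singleton, smul_eq_mul, sub_mul, one_mul,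
      sub_eq_zero, mul_comm] at hr_sub_one
    exact hr_sub_one
  exact har ▸ Ideal.mul_mem_mul ha hr
end

section
/- For a finitely generated flat module M over a commutative ring R, the support of \Lambda^n M equals the set of primes p such that the rank of the free R_p-module M_p is at least n. -/
open Module Submodule

universe u

theorem kaplansky_aux {A M : Type u} [CommRing A] [IsLocalRing A]
    [AddCommGroup M] [Module A M] [Module.Finite A M] [Module.Flat A M] :
    Module.Free A M := by
  classical
  have hex : ∃ d : ℕ, ∃ x : Fin d → M, Submodule.span A (Set.range x) = ⊤ :=
    Module.Finite.exists_fin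
  obtain ⟨x, hx⟩ := Nat.find_spec hex
  revert x
  generalize hd : Nat.find hex = d
  intro x hx
  -- residues of a minimal generating family are linearly independent
  have key : ∀ c : Fin d → A, ∑ i, c i • x i = 0 → ∀ i, c i ∈ IsLocalRing.maximalIdeal A := by
    intro c hc i
    by_contra hci
    have hu : IsUnit (c i) := IsLocalRing.notMem_maximalIdeal.mp hci
    obtain ⟨m, hm⟩ : ∃ m, d = m + 1 := ⟨d - 1, (Nat.succ_pred_eq_of_pos (Fin.pos i)).symm⟩
    set σ : Fin m → Fin d := fun k => Fin.cast hm.symm ((Fin.cast hm i).succAbove k) with hσ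
    have hσne : ∀ j : Fin d, j ≠ i → ∃ k, σ k = j := by
      intro j hj
      obtain ⟨k, hk⟩ := Fin.exists_succAbove_eq
        (show Fin.cast hm j ≠ Fin.cast hm i from
          fun h => hj (by simpa using congrArg (Fin.cast hm.symm) h))
      exact ⟨k, by simp [hσ, hk]⟩
    have hxi : x i ∈ Submodule.span A (Set.range (x ∘ σ)) := by
      have h1 : c i • x i = -∑ j ∈ Finset.univ.erase i, c j • x j := by
        rw [eq_neg_iff_add_eq_zero]
        rw [← Finset.sum_erase_add _ _ (Finset.mem_univ i)] at hc
        rw [add_comm] at hc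
        exact hc
      obtain ⟨v, hv⟩ := hu.exists_left_inv
      have h2 : x i = v • (c i • x i) := by
        rw [← mul_smul, hv, one_smul]
      rw [h2, h1]
      refine Submodule.smul_mem _ _ (Submodule.neg_mem _ (Submodule.sum_mem _ ?_))
      intro j hj
      obtain ⟨k, rfl⟩ := hσne j (Finset.ne_of_mem_erase hj)
      exact Submodule.smul_mem _ _ (Submodule.subset_span ⟨k, rfl⟩)
    have htop : Submodule.span A (Set.range (x ∘ σ)) = ⊤ := by
      rw [eq_top_iff, ← hx, Submodule.span_le]
      rintro _ ⟨j, rfl⟩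
      rcases eq_or_ne j i with rfl | hne
      · exact hxi
      · obtain ⟨k, rfl⟩ := hσne j hne
        exact Submodule.subset_span ⟨k, rfl⟩
    exact Nat.find_min hex (m := m) (by omega) ⟨_, htop⟩
  -- linear independence via the equational criterion for flatness
  have hli : LinearIndependent A x := by
    rw [Fintype.linearIndependent_iff]
    intro g hg
    have hg' : ∑ i : ULift.{u} (Fin d), (g ∘ ULift.down) i • (x ∘ ULift.down) i = 0 := by
      rw [← hg]
      exact Fintype.sum_equiv Equiv.ulift _ _ (fun i => rfl)
    obtain ⟨κ, a, y, hxy, hga⟩ := Module.Flat.isTrivialRelation_of_sum_smul_eq_zero hg'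
    have hyc : ∀ j : Fin κ, ∃ c : Fin d → A, ∑ l, c l • x l = y j := fun j =>
      (mem_span_range_iff_exists_fun A).mp (by rw [hx]; trivial)
    choose c hc using hyc
    set B : Matrix (Fin d) (Fin d) A :=
      Matrix.of fun i l => ∑ j, a ⟨i⟩ j * c j l with hB
    have e1 : ∀ i, x i = ∑ l, B i l • x l := by
      intro i
      calc x i = ∑ j, a ⟨i⟩ j • y j := hxy ⟨i⟩
        _ = ∑ j, ∑ l, (a ⟨i⟩ j * c j l) • x l := by
            refine Finset.sum_congr rfl fun j _ => ?_
            rw [← hc j, Finset.smul_sum]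
            simp_rw [smul_smul]
        _ = ∑ l, B i l • x l := by
            rw [Finset.sum_comm]
            refine Finset.sum_congr rfl fun l _ => ?_
            rw [hB, Matrix.of_apply, Finset.sum_smul]
    have hBx : ∀ i, ∑ l, ((B i l - (1 : Matrix (Fin d) (Fin d) A) i l) • x l) = 0 := by
      intro i
      have : ∑ l, ((1 : Matrix (Fin d) (Fin d) A) i l) • x l = x i := by
        simp [Matrix.one_apply, ite_smul]
      simp_rw [sub_smul, Finset.sum_sub_distrib, this, ← e1 i, sub_self]
    have hmem : ∀ i l, B i l - (1 : Matrix (Fin d) (Fin d) A) i l ∈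
        IsLocalRing.maximalIdeal A := fun i l => key _ (hBx i) l
    have hdet : IsUnit B.det := by
      rw [← IsLocalRing.notMem_maximalIdeal]
      intro hdm
      have hmap : B.map (IsLocalRing.residue A) = 1 := by
        ext i l
        have h0 : IsLocalRing.residue A (B i l - (1 : Matrix (Fin d) (Fin d) A) i l) = 0 :=
          (IsLocalRing.residue_eq_zero_iff _).mpr (hmem i l)
        rw [map_sub, sub_eq_zero] at h0
        rw [Matrix.map_apply, h0]
        simp [Matrix.one_apply, apply_ite (IsLocalRing.residue A)]
      have h1 : IsLocalRing.residue A B.det = 1 := by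
        rw [RingHom.map_det, RingHom.mapMatrix_apply, hmap, Matrix.det_one]
      rw [(IsLocalRing.residue_eq_zero_iff _).mpr hdm] at h1
      exact zero_ne_one h1
    have hga' : Matrix.vecMul g (Matrix.of fun i j => a ⟨i⟩ j) = 0 := by
      ext j
      have h2 : ∑ i : Fin d, g i * a ⟨i⟩ j = 0 := by
        rw [← hga j]
        exact (Fintype.sum_equiv Equiv.ulift
          (fun i : ULift.{u} (Fin d) => (g ∘ ULift.down) i * a i j)
          (fun i : Fin d => g i * a ⟨i⟩ j) (fun i => rfl)).symm
      simpa [Matrix.vecMul, dotProduct] using h2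
    have hgB : Matrix.vecMul g B = 0 := by
      have hfact : (Matrix.of fun i j => a ⟨i⟩ j) * (Matrix.of fun j l => c j l) = B := by
        ext i l
        rw [Matrix.mul_apply]
        rfl
      rw [← hfact, ← Matrix.vecMul_vecMul, hga', Matrix.zero_vecMul]
    have : g = 0 := by
      have h1 := congrArg (fun v => Matrix.vecMul v B⁻¹) hgB
      simpa [Matrix.vecMul_vecMul, Matrix.mul_nonsing_inv B hdet] using h1
    exact fun i => congrFun this i
  exact Module.Free.of_basis (Basis.mk hli (by rw [hx]))

theorem kaplansky_free {A : Type*} (M : Type*) [CommRing A] [IsLocalRing A]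
    [AddCommGroup M] [Module A M] [Module.Finite A M] [Module.Flat A M] :
    Module.Free A M := by
  obtain ⟨k, f, hf⟩ := Module.Finite.exists_fin' A M
  let e : ((Fin k → A) ⧸ LinearMap.ker f) ≃ₗ[A] M := f.quotKerEquivOfSurjective hf
  haveI : Module.Finite A ((Fin k → A) ⧸ LinearMap.ker f) := Module.Finite.equiv e.symm
  haveI : Module.Flat A ((Fin k → A) ⧸ LinearMap.ker f) := Module.Flat.of_linearEquiv e
  haveI := kaplansky_aux (A := A) (M := (Fin k → A) ⧸ LinearMap.ker f)
  exact Module.Free.of_equiv e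

/-- For a finitely generated flat module `M`, the support of `⋀^n M` is the set
of primes where the local rank of `M` is at least `n`. -/
theorem support_exteriorPower_eq
    (R M : Type*) [CommRing R] [AddCommGroup M] [Module R M]
    [Module.Finite R M] [Module.Flat R M] (n : ℕ) :
    Module.support R (⋀[R]^n M) =
      {p : PrimeSpectrum R |
        n ≤ Module.finrank (Localization.AtPrime p.asIdeal)
          (LocalizedModule p.asIdeal.primeCompl M)} := by
  classical
  ext p
  set S := p.asIdeal.primeCompl with hS
  set A := Localization.AtPrime p.asIdeal with hA
  set N := LocalizedModule S M with hN
  set mkL := LocalizedModule.mkLinearMap S M with hmkL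
  haveI : Module.Finite A N := Module.Finite.of_isLocalizedModule S mkL
  haveI : Module.Free A N := kaplansky_free N
  set r := Module.finrank A N with hr
  set b : Basis (Fin r) A N := Module.finBasis A N with hb
  -- rescale the basis so that it comes from elements of `M`
  have hbs : ∀ i, ∃ (m : M) (s : S), b i = LocalizedModule.mk m s := fun i =>
    LocalizedModule.induction_on (fun m s => ⟨m, s, rfl⟩) (b i)
  choose m s hms using hbs
  set u : Fin r → Aˣ := fun i => (IsLocalization.map_units A (s i)).unit with hu
  set b' : Basis (Fin r) A N := b.unitsSMul u with hb'
  have hb'x : ∀ i, b' i = mkL (m i) := by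
    intro i
    rw [hb', Basis.unitsSMul_apply, hu]
    show ((IsLocalization.map_units A (s i)).unit : A) • b i = mkL (m i)
    rw [IsUnit.unit_spec, hms i, algebraMap_smul, LocalizedModule.smul'_mk,
      ← Submonoid.smul_def, LocalizedModule.mk_cancel, hmkL, LocalizedModule.mkLinearMap_apply]
  set x : Fin r → M := m with hx
  show _ ↔ n ≤ r
  by_cases hn : n ≤ r
  · simp only [hn, iff_true]
    -- construct a determinant functional detecting nonvanishing
    set g : M →ₗ[R] (Fin n → A) :=
      LinearMap.pi (fun j => ((b'.coord (Fin.castLE hn j)).restrictScalars R).comp mkL) with hg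
    set Falt : M [⋀^Fin n]→ₗ[R] A :=
      { toMultilinearMap :=
          ((Matrix.detRowAlternating :
            ((Fin n → A) [⋀^Fin n]→ₗ[A] A)).toMultilinearMap.restrictScalars R).compLinearMap
            (fun _ => g)
        map_eq_zero_of_eq' := by
          intro v i j hv hij
          exact Matrix.detRowAlternating.map_eq_zero_of_eq (fun k => g (v k))
            (show g (v i) = g (v j) from congrArg g hv) hij } with hFalt
    set fam : ∀ i : ℕ, M [⋀^Fin i]→ₗ[R] A :=
      Function.update (fun i => (0 : M [⋀^Fin i]→ₗ[R] A)) n Falt with hfam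
    set L : ExteriorAlgebra R M →ₗ[R] A := ExteriorAlgebra.liftAlternating fam with hL
    set v : Fin n → M := fun j => x (Fin.castLE hn j) with hv
    have hFv : Falt v = 1 := by
      show Matrix.detRowAlternating (fun k => g (v k)) = 1
      have : (fun k => g (v k)) = (1 : Matrix (Fin n) (Fin n) A) := by
        ext k j
        show (b'.coord (Fin.castLE hn j)) (mkL (v k)) = _
        rw [hv, ← hb'x, Basis.coord_apply, Basis.repr_self, Finsupp.single_apply,
          Matrix.one_apply]
        simp [Fin.castLE_inj, eq_comm]
      rw [this]
      exact Matrix.det_one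
    have hLv : ∀ c : R, L (c • ExteriorAlgebra.ιMulti R n v) = algebraMap R A c := by
      intro c
      rw [map_smul, hL, ExteriorAlgebra.liftAlternating_apply_ιMulti, hfam,
        Function.update_self, hFv, Algebra.algebraMap_eq_smul_one]
    rw [Module.mem_support_iff']
    refine ⟨⟨ExteriorAlgebra.ιMulti R n v, ExteriorAlgebra.ιMulti_range R n
      (Set.mem_range_self _)⟩, fun c hc h0 => ?_⟩
    have h1 : (c : R) • ExteriorAlgebra.ιMulti R n v = 0 := by
      have := congrArg (Subtype.val) h0
      simpa using this
    have h2 := hLv c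
    rw [h1, map_zero] at h2
    exact (IsLocalization.map_units A (⟨c, hc⟩ : S)).ne_zero h2.symm
  · simp only [hn, iff_false]
    push_neg at hn
    -- find f ∈ S with f • M ⊆ span of the x i
    obtain ⟨k, y, hy⟩ := Module.Finite.exists_fin (R := R) (M := M)
    have hstep : ∀ j : Fin k, ∃ f : S, (f : R) • y j ∈ Submodule.span R (Set.range x) := by
      intro j
      obtain ⟨t, ht⟩ := IsLocalization.exist_integer_multiples_of_finite S
        (fun i => b'.repr (mkL (y j)) i)
      have ht' : ∀ i, ∃ cr : R, algebraMap R A cr = (t : R) • b'.repr (mkL (y j)) i :=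
        fun i => ht i
      choose c hc using ht'
      have hz : mkL ((t : R) • y j - ∑ i, c i • x i) = 0 := by
        rw [map_sub, map_smul, map_sum]
        have h1 : (t : R) • mkL (y j) = ∑ i, c i • b' i := by
          conv_lhs => rw [← b'.sum_repr (mkL (y j))]
          rw [Finset.smul_sum]
          refine Finset.sum_congr rfl fun i _ => ?_
          rw [← smul_assoc, ← hc i, algebraMap_smul]
        rw [h1]
        rw [sub_eq_zero]
        refine Finset.sum_congr rfl fun i _ => ?_
        rw [map_smul, hb'x i]
      obtain ⟨w, hw⟩ := (IsLocalizedModule.eq_zero_iff S mkL).mp hz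
      refine ⟨w * t, ?_⟩
      have hw' : (w : R) • ((t : R) • y j) = (w : R) • (∑ i, c i • x i) := by
        have h3 : (w : R) • ((t : R) • y j - ∑ i, c i • x i) = 0 := by
          rw [← Submonoid.smul_def]; exact hw
        rw [smul_sub, sub_eq_zero] at h3
        exact h3
      rw [Submonoid.coe_mul, mul_smul, hw']
      exact Submodule.smul_mem _ _ (Submodule.sum_mem _ fun i _ =>
        Submodule.smul_mem _ _ (Submodule.subset_span ⟨i, rfl⟩))
    choose F hF using hstep
    set f : S := ∏ j, F j with hf
    have hfy : ∀ j, (f : R) • y j ∈ Submodule.span R (Set.range x) := by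
      intro j
      have h1 : (f : R) = (F j : R) * ∏ j' ∈ Finset.univ.erase j, (F j' : R) := by
        rw [hf, Submonoid.coe_finset_prod]
        exact (Finset.mul_prod_erase Finset.univ _ (Finset.mem_univ j)).symm
      rw [h1, mul_comm, mul_smul]
      exact Submodule.smul_mem _ _ (hF j)
    have hfM : ∀ mm : M, (f : R) • mm ∈ Submodule.span R (Set.range x) := by
      have hle : Submodule.span R (Set.range y) ≤
          Submodule.comap (LinearMap.lsmul R M (f : R)) (Submodule.span R (Set.range x)) := by
        rw [Submodule.span_le]
        rintro _ ⟨j, rfl⟩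
        exact hfy j
      intro mm
      exact hle (by rw [hy]; trivial)
    have hvan : ∀ v : Fin n → M, ((f : R) ^ n) • ExteriorAlgebra.ιMulti R n v = 0 := by
      intro v
      choose cc hcc using fun i => (mem_span_range_iff_exists_fun R).mp (hfM (v i))
      have e1 : ExteriorAlgebra.ιMulti R n (fun i => (f : R) • v i)
          = ((f : R) ^ n) • ExteriorAlgebra.ιMulti R n v := by
        have h := (ExteriorAlgebra.ιMulti R n).toMultilinearMap.map_smul_univ
          (fun _ => (f : R)) v
        rw [Finset.prod_const, Finset.card_univ, Fintype.card_fin] at h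
        exact h
      rw [← e1]
      have h2 : (fun i => (f : R) • v i) = fun i => ∑ l, cc i l • x l :=
        funext fun i => (hcc i).symm
      rw [h2]
      have e2 : ExteriorAlgebra.ιMulti R n (fun i => ∑ l, cc i l • x l)
          = ∑ dd : Fin n → Fin r,
            ExteriorAlgebra.ιMulti R n (fun i => cc i (dd i) • x (dd i)) :=
        (ExteriorAlgebra.ιMulti R n).toMultilinearMap.map_sum (g := fun i l => cc i l • x l)
      rw [e2]
      refine Finset.sum_eq_zero fun dd _ => ?_
      have e3 : ExteriorAlgebra.ιMulti R n (fun i => cc i (dd i) • x (dd i))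
          = (∏ i, cc i (dd i)) • ExteriorAlgebra.ιMulti R n (fun i => x (dd i)) :=
        (ExteriorAlgebra.ιMulti R n).toMultilinearMap.map_smul_univ _ _
      rw [e3]
      obtain ⟨i1, i2, hne, heq⟩ := Fintype.exists_ne_map_eq_of_card_lt dd (by simpa using hn)
      rw [(ExteriorAlgebra.ιMulti R n).map_eq_zero_of_eq
        (fun i => x (dd i)) (congrArg x heq) hne, smul_zero]
    rw [Module.notMem_support_iff']
    intro w
    refine ⟨(f : R) ^ n, S.pow_mem f.2 n, ?_⟩
    have hw1 : ∀ z ∈ (⋀[R]^n M : Submodule R (ExteriorAlgebra R M)), ((f : R) ^ n) • z = 0 := by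
      intro z hz
      rw [← ExteriorAlgebra.ιMulti_span_fixedDegree] at hz
      induction hz using Submodule.span_induction with
      | mem z hz => obtain ⟨v, rfl⟩ := hz; exact hvan v
      | zero => simp
      | add z1 z2 _ _ h1 h2 => rw [smul_add, h1, h2, add_zero]
      | smul a z _ h1 => rw [smul_comm, h1, smul_zero]
    exact Subtype.ext (hw1 w.1 w.2)
end

section
/- Let A \subseteq B be an extension of commutative rings and let M be a finitely generated flat A-module. If M \otimes_A B is projective as a B-module, then M is projective as an A-module. -/
/-!
Present `M` as a quotient of `F = Aⁿ` by `K`. Since `B ⊗ M` is finite projective, hence finitely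
presented, the kernel `B ⊗ K` of `B ⊗ F → B ⊗ M` is finitely generated, so it is already generated
by the image of a finitely generated `K₀ ≤ K`. The equational criterion for flatness factors
`F → M` through a finite free module `P` by a map `a` killing `K₀`. Then `B ⊗ a` kills `B ⊗ K`,
and because `P → B ⊗ P` is injective (`A → B` is injective and `P` is flat), `a` kills `K`.
Hence `a` descends to a section of `P → M`, and `M` is a direct summand of `P`.
-/

open TensorProduct

theorem TensorProduct.mk_one_injective_of_flat {A B : Type*} [CommRing A] [CommRing B]
    [Algebra A B] (hinj : Function.Injective (algebraMap A B)) (P : Type*) [AddCommGroup P]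
    [Module A P] [Module.Flat A P] :
    Function.Injective (TensorProduct.mk A B P 1) := by
  convert Module.Flat.rTensor_preserves_injective_linearMap (M := P) (Algebra.linearMap A B) hinj
    |>.comp (TensorProduct.lid A P).symm.injective
  ext
  simp

namespace Submodule

section

variable {R M : Type*} [CommSemiring R] [AddCommMonoid M] [Module R M] (A : Type*)
  [CommSemiring A] [Algebra R A]

theorem exists_fg_le_baseChange_eq {p : Submodule R M} (h : (p.baseChange A).FG) :
    ∃ q ≤ p, q.FG ∧ q.baseChange A = p.baseChange A := by
  rw [baseChange_eq_span, map_coe, fg_span_iff_fg_span_finset_subset] at h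
  obtain ⟨s, hsp, hspan⟩ := h
  obtain ⟨t, htp, ht, hts⟩ := Set.exists_subset_image_finite_and.mp ⟨_, hsp, s.finite_toSet, rfl⟩
  refine ⟨span R t, span_le.mpr htp, fg_def.mpr ⟨t, ht, rfl⟩, ?_⟩
  rw [baseChange_span, ← hts, baseChange_eq_span, map_coe, hspan]

theorem baseChange_ker_le_ker_baseChange {N : Type*} [AddCommMonoid N] [Module R N]
    (f : M →ₗ[R] N) : (LinearMap.ker f).baseChange A ≤ LinearMap.ker (f.baseChange A) := by
  rw [baseChange, LinearMap.range_le_ker_iff, ← LinearMap.baseChange_comp,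
    LinearMap.comp_ker_subtype, LinearMap.baseChange_zero]

end

theorem le_ker_of_baseChange_le_ker_baseChange {R M A : Type*} [CommRing R] [AddCommGroup M]
    [Module R M] [CommRing A] [Algebra R A] (hinj : Function.Injective (algebraMap R A))
    {P : Type*} [AddCommGroup P] [Module R P] [Module.Flat R P] {a : M →ₗ[R] P}
    {p : Submodule R M} (h : p.baseChange A ≤ LinearMap.ker (a.baseChange A)) :
    p ≤ LinearMap.ker a := by
  intro x hx
  have hx' := h (tmul_mem_baseChange_of_mem (1 : A) hx)
  rw [LinearMap.mem_ker, LinearMap.baseChange_tmul] at hx'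
  exact TensorProduct.mk_one_injective_of_flat hinj P (hx'.trans (tmul_zero P 1).symm)

end Submodule

theorem LinearMap.ker_baseChange_of_surjective {R M N : Type*} [CommRing R] [AddCommGroup M]
    [Module R M] [AddCommGroup N] [Module R N] (A : Type*) [CommRing A] [Algebra R A]
    {f : M →ₗ[R] N} (hf : Function.Surjective f) :
    LinearMap.ker (f.baseChange A) = (LinearMap.ker f).baseChange A :=
  have hexact : Function.Exact ((LinearMap.ker f).subtype.baseChange A) (f.baseChange A) :=
    lTensor_exact A f.exact_subtype_ker_map hf
  LinearMap.exact_iff.mp hexact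

theorem Module.Flat.exists_factorization_of_le_ker {R M N : Type*} [CommRing R] [AddCommGroup M]
    [Module R M] [Module.Flat R M] [AddCommGroup N] [Module R N] [Module.Free R N]
    [Module.Finite R N] {π : N →ₗ[R] M} {q : Submodule R N} (hq : q.FG)
    (hle : q ≤ LinearMap.ker π) :
    ∃ (k : ℕ) (a : N →ₗ[R] (Fin k →₀ R)) (y : (Fin k →₀ R) →ₗ[R] M),
      π = y ∘ₗ a ∧ q ≤ LinearMap.ker a := by
  have : Module.Finite R q := Module.Finite.iff_fg.mpr hq
  obtain ⟨k, a, y, hya, haq⟩ := exists_factorization_of_comp_eq_zero_of_free (f := q.subtype)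
    (LinearMap.range_le_ker_iff.mp (by rwa [Submodule.range_subtype]))
  refine ⟨k, a, y, hya, ?_⟩
  rwa [← Submodule.range_subtype q, LinearMap.range_le_ker_iff]

theorem Module.Projective.of_comp_eq_of_ker_le {R F M P : Type*} [CommRing R] [AddCommGroup F]
    [Module R F] [AddCommGroup M] [Module R M] [AddCommGroup P] [Module R P] [Module.Projective R P]
    {π : F →ₗ[R] M} (hπ : Function.Surjective π) (a : F →ₗ[R] P) (y : P →ₗ[R] M)
    (hya : π = y ∘ₗ a) (hker : LinearMap.ker π ≤ LinearMap.ker a) :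
    Module.Projective R M := by
  refine .of_split ((LinearMap.ker π).liftQ a hker ∘ₗ (π.quotKerEquivOfSurjective hπ).symm) y ?_
  ext m
  obtain ⟨x, rfl⟩ := hπ m
  have hx : (π.quotKerEquivOfSurjective hπ).symm (π x) = Submodule.Quotient.mk x :=
    LinearEquiv.symm_apply_eq _ |>.mpr rfl
  simp only [LinearMap.comp_apply, LinearEquiv.coe_coe, hx, Submodule.liftQ_apply,
    LinearMap.id_apply]
  exact (LinearMap.congr_fun hya x).symm

/-- If `A ⊆ B` is a ring extension, `M` a finitely generated flat `A`-module, and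
`M ⊗_A B` is `B`-projective, then `M` is `A`-projective. -/
theorem projective_of_baseChange_projective
    (A B M : Type*) [CommRing A] [CommRing B] [Algebra A B]
    (hinj : Function.Injective (algebraMap A B))
    [AddCommGroup M] [Module A M] [Module.Finite A M] [Module.Flat A M]
    (hproj : Module.Projective B (B ⊗[A] M)) :
    Module.Projective A M := by
  obtain ⟨n, π, hπ⟩ := Module.Finite.exists_fin' A M
  have : Module.FinitePresentation B (B ⊗[A] M) := Module.finitePresentation_of_projective B _
  have hfg : ((LinearMap.ker π).baseChange B).FG := by
    rw [← LinearMap.ker_baseChange_of_surjective B hπ]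
    exact Module.FinitePresentation.fg_ker _ (LinearMap.lTensor_surjective B hπ)
  obtain ⟨q, hqπ, hqfg, hq⟩ := Submodule.exists_fg_le_baseChange_eq B hfg
  obtain ⟨k, a, y, hya, hqa⟩ := Module.Flat.exists_factorization_of_le_ker hqfg hqπ
  have hker : LinearMap.ker π ≤ LinearMap.ker a :=
    Submodule.le_ker_of_baseChange_le_ker_baseChange hinj <| hq ▸
      (Submodule.baseChange_mono B hqa).trans (Submodule.baseChange_ker_le_ker_baseChange B a)
  exact .of_comp_eq_of_ker_le hπ a y hya hker
end

section
/- Let M be a finitely generated flat module over a commutative ring R and J an ideal of R. Then Ann_R(M/JM) = Ann_R(M) + J. -/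
/-!
If `r` kills `M/JM` then `rM ⊆ JM`, and flatness gives
`rM = rM ∩ JM = (rR ∩ J)M = (J : r)·rM`. Nakayama on the finitely generated module `rM` yields
`s ≡ 1 mod (J : r)` with `s·rM = 0`, so `r = sr - (s - 1)r ∈ Ann(M) + J`.
Flatness enters through `(I ∩ J)M = IM ∩ JM`, obtained by tensoring the exact sequence
`0 → I ∩ J → R → R/I × R/J` with `M`.
-/

open TensorProduct

section

variable {R M : Type*} [CommRing R] [AddCommGroup M] [Module R M]

theorem Module.Flat.inf_smul_top [Module.Flat R M] (I J : Ideal R) :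
    (I ⊓ J) • (⊤ : Submodule R M) = I • ⊤ ⊓ J • ⊤ := by
  let q : R →ₗ[R] (R ⧸ I) × (R ⧸ J) := I.mkQ.prod J.mkQ
  have hq : Function.Exact (I ⊓ J).subtype q := by
    rw [LinearMap.exact_iff, LinearMap.ker_prod, Submodule.ker_mkQ, Submodule.ker_mkQ,
      Submodule.range_subtype]
  let e : ((R ⧸ I) × (R ⧸ J)) ⊗[R] M ≃ₗ[R] (M ⧸ I • (⊤ : Submodule R M)) × (M ⧸ J • ⊤) :=
    prodLeft R R (R ⧸ I) (R ⧸ J) M ≪≫ₗ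
      (quotTensorEquivQuotSMul M I).prodCongr (quotTensorEquivQuotSMul M J)
  let p : M →ₗ[R] (M ⧸ I • (⊤ : Submodule R M)) × (M ⧸ J • ⊤) :=
    (I • ⊤ : Submodule R M).mkQ.prod (J • ⊤ : Submodule R M).mkQ
  have he : e ∘ₗ q.rTensor M = p ∘ₗ TensorProduct.lid R M :=
    TensorProduct.ext' fun a m => by simp [e, q, p]
  have hker : (q.rTensor M).ker = (p ∘ₗ TensorProduct.lid R M).ker := by
    rw [← he, LinearEquiv.ker_comp]
  rw [← Ideal.subtype_rTensor_range, LinearMap.range_comp,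
    ← LinearMap.exact_iff.mp (Module.Flat.rTensor_exact M hq), hker, LinearMap.ker_comp,
    Submodule.map_comap_eq_of_surjective (TensorProduct.lid R M).surjective,
    LinearMap.ker_prod, Submodule.ker_mkQ, Submodule.ker_mkQ]

theorem Ideal.span_singleton_inf_eq_colon_mul (r : R) (J : Ideal R) :
    Ideal.span {r} ⊓ J = J.colon {r} * Ideal.span {r} := by
  ext a
  simp only [Submodule.mem_inf, Ideal.mem_span_singleton', Ideal.mem_mul_span_singleton,
    Submodule.mem_colon_singleton, smul_eq_mul]
  constructor
  · rintro ⟨⟨c, rfl⟩, ha⟩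
    exact ⟨c, ha, rfl⟩
  · rintro ⟨c, hc, rfl⟩
    exact ⟨⟨c, rfl⟩, hc⟩

theorem Module.Flat.span_singleton_smul_top_eq_colon_smul [Module.Flat R M] {r : R}
    {J : Ideal R} (h : Ideal.span {r} • (⊤ : Submodule R M) ≤ J • ⊤) :
    Ideal.span {r} • (⊤ : Submodule R M) = J.colon {r} • Ideal.span {r} • ⊤ :=
  calc Ideal.span {r} • (⊤ : Submodule R M)
      = Ideal.span {r} • ⊤ ⊓ J • ⊤ := (inf_eq_left.mpr h).symm
    _ = J.colon {r} • Ideal.span {r} • ⊤ := by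
      rw [← Module.Flat.inf_smul_top, Ideal.span_singleton_inf_eq_colon_mul, Submodule.mul_smul]

theorem Module.Flat.mem_annihilator_sup_of_mem_colon [Module.Finite R M] [Module.Flat R M]
    {r : R} {J : Ideal R} (hr : r ∈ (J • ⊤ : Submodule R M).colon Set.univ) :
    r ∈ Module.annihilator R M ⊔ J := by
  have h : Ideal.span {r} • (⊤ : Submodule R M) ≤ J • ⊤ :=
    Submodule.smul_le.mpr fun a ha m _ => by
      obtain ⟨c, rfl⟩ := Ideal.mem_span_singleton'.mp ha
      rw [mul_smul]
      exact Submodule.smul_mem _ c (Submodule.mem_colon.mp hr m trivial)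
  obtain ⟨s, hs, hsN⟩ := Submodule.exists_sub_one_mem_and_smul_eq_zero_of_fg_of_le_smul
    (J.colon {r}) (Ideal.span {r} • ⊤)
    (Submodule.FG.smul (Submodule.fg_span_singleton r) Module.Finite.fg_top)
    (Module.Flat.span_singleton_smul_top_eq_colon_smul h).le
  have hsr : s * r ∈ Module.annihilator R M := Module.mem_annihilator.mpr fun m => by
    rw [mul_smul]
    exact hsN _ (Submodule.smul_mem_smul (Ideal.mem_span_singleton_self r) trivial)
  have hs' : (s - 1) * r ∈ J := Submodule.mem_colon_singleton.mp hs
  rw [show r = s * r - (s - 1) * r by ring]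
  exact Submodule.sub_mem _ (Submodule.mem_sup_left hsr) (Submodule.mem_sup_right hs')

theorem Module.annihilator_sup_le_annihilator_quotient_smul_top (J : Ideal R) :
    Module.annihilator R M ⊔ J ≤ Module.annihilator R (M ⧸ (J • ⊤ : Submodule R M)) := by
  refine sup_le (LinearMap.annihilator_le_of_surjective _ (Submodule.mkQ_surjective _))
    fun a ha => ?_
  rw [Submodule.annihilator_quotient, Submodule.mem_colon]
  exact fun m _ => Submodule.smul_mem_smul ha trivial

end

/-- For a finitely generated flat module `M` and any ideal `J`,
`Ann(M/JM) = Ann(M) + J`. -/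
theorem annihilator_quotient_smul_eq
    (R M : Type*) [CommRing R] [AddCommGroup M] [Module R M]
    [Module.Finite R M] [Module.Flat R M] (J : Ideal R) :
    Module.annihilator R (M ⧸ (J • ⊤ : Submodule R M)) =
      Module.annihilator R M ⊔ J := by
  refine le_antisymm (fun r hr => ?_) (Module.annihilator_sup_le_annihilator_quotient_smul_top J)
  rw [Submodule.annihilator_quotient] at hr
  exact Module.Flat.mem_annihilator_sup_of_mem_colon hr
end

section
/- Let I be an ideal of a commutative ring R. Then R/I is flat as an R-module if and only if for every f \in I, Ann_R(f) + I = R. -/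
open TensorProduct

/-- Scalar action on the quotient ring: `s • mk t = mk (s * t)`. -/
theorem quotient_smul_mk_aux {R : Type*} [CommRing R] (I : Ideal R) (s t : R) :
    s • Ideal.Quotient.mk I t = Ideal.Quotient.mk I (s * t) := by
  rw [Algebra.smul_def, Ideal.Quotient.algebraMap_eq, ← map_mul]

/-- `R/I` is flat over `R` iff for every `f ∈ I`, `Ann_R(f) + I = R`. -/
theorem quotient_flat_iff
    (R : Type*) [CommRing R] (I : Ideal R) :
    Module.Flat R (R ⧸ I) ↔ ∀ f ∈ I, Ideal.torsionOf R R f ⊔ I = ⊤ := by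
  constructor
  · intro hF f hf
    -- the relation f • (mk 1) = 0
    have hrel : ∑ i : PUnit.{1}, (fun _ : PUnit.{1} => f) i •
        (fun _ : PUnit.{1} => (Ideal.Quotient.mk I 1)) i = 0 := by
      simp only [Finset.univ_unique, Finset.sum_singleton]
      rw [quotient_smul_mk_aux, mul_one, Ideal.Quotient.eq_zero_iff_mem]
      exact hf
    obtain ⟨κ, a, y, h1, h2⟩ := Module.Flat.isTrivialRelation_of_sum_smul_eq_zero hrel
    choose r hr using fun j => Ideal.Quotient.mk_surjective (y j)
    have key : Ideal.Quotient.mk I 1 = Ideal.Quotient.mk I (∑ j, a PUnit.unit j * r j) := by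
      have h1' := h1 PUnit.unit
      simp only at h1'
      rw [map_sum, h1']
      exact Finset.sum_congr rfl fun j _ => by rw [← hr j, quotient_smul_mk_aux]
    have hmem : (1 : R) - ∑ j, a PUnit.unit j * r j ∈ I := by
      rw [← Ideal.Quotient.eq_zero_iff_mem, map_sub, key, sub_self]
    rw [Ideal.eq_top_iff_one]
    have h1' : (1 : R) = (∑ j, a PUnit.unit j * r j) + ((1 : R) - ∑ j, a PUnit.unit j * r j) := by ring
    rw [h1']
    apply Submodule.add_mem_sup _ hmem
    -- ∑ a PUnit.unit j * r j annihilates f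
    rw [Ideal.mem_torsionOf_iff]
    have hexp : (∑ j, a PUnit.unit j * r j) • f = ∑ j, (f * a PUnit.unit j) * r j := by
      rw [smul_eq_mul, Finset.sum_mul]
      exact Finset.sum_congr rfl fun j _ => by ring
    rw [hexp]
    have h2' : ∀ j, f * a PUnit.unit j = 0 := fun j => by
      simpa [Finset.univ_unique] using h2 j
    simp [h2']
  · intro h
    rw [Module.Flat.iff_rTensor_injective']
    intro J
    have hform : ∀ x : J ⊗[R] (R ⧸ I), ∃ g : J, x = g ⊗ₜ[R] Ideal.Quotient.mk I 1 := by
      intro x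
      induction x using TensorProduct.induction_on with
      | zero => exact ⟨0, by simp⟩
      | tmul j m =>
        obtain ⟨s, rfl⟩ := Ideal.Quotient.mk_surjective m
        refine ⟨s • j, ?_⟩
        rw [TensorProduct.smul_tmul, quotient_smul_mk_aux, mul_one]
      | add x y hx hy =>
        obtain ⟨g1, rfl⟩ := hx
        obtain ⟨g2, rfl⟩ := hy
        exact ⟨g1 + g2, by rw [TensorProduct.add_tmul]⟩
    rw [injective_iff_map_eq_zero]
    intro x hx
    obtain ⟨g, rfl⟩ := hform x
    -- the image is (g : R) ⊗ mk 1; applying lid gives mk g = 0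
    have himg : LinearMap.rTensor (R ⧸ I) J.subtype (g ⊗ₜ[R] Ideal.Quotient.mk I 1)
        = (g : R) ⊗ₜ[R] Ideal.Quotient.mk I 1 := rfl
    rw [himg] at hx
    have hgI : (g : R) ∈ I := by
      have h0 := congrArg (TensorProduct.lid R (R ⧸ I)) hx
      simp only [TensorProduct.lid_tmul, map_zero] at h0
      rw [quotient_smul_mk_aux, mul_one, Ideal.Quotient.eq_zero_iff_mem] at h0
      exact h0
    have htop := h (g : R) hgI
    rw [Ideal.eq_top_iff_one] at htop
    obtain ⟨c, hc, e, he, hce⟩ := Submodule.mem_sup.mp htop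
    rw [Ideal.mem_torsionOf_iff, smul_eq_mul] at hc
    have hge : (g : R) = e * (g : R) := by
      linear_combination hc - (g : R) * hce
    have hg' : g = e • g := Subtype.ext (by simpa [smul_eq_mul] using hge)
    rw [hg', TensorProduct.smul_tmul, quotient_smul_mk_aux, mul_one,
      Ideal.Quotient.eq_zero_iff_mem.mpr he, TensorProduct.tmul_zero]
end

section
/- Let A be a nonzero commutative ring, R = \prod_{i \geq 1} A the countably infinite product, and I = \bigoplus_{i \geq 1} A the ideal of eventually-zero sequences. Then R/I is a flat R-module but not a projective R-module. -/
/-- The ideal of eventually zero sequences in a countably infinite product ring. -/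
def eventuallyZeroIdeal (A : Type*) [CommRing A] : Ideal (ℕ → A) where
  carrier := {x | (Function.support x).Finite}
  zero_mem' := by simp [Function.support_zero]
  add_mem' := by
    intro a b ha hb
    exact ((ha.union hb).subset (Function.support_add a b))
  smul_mem' := by
    intro c x hx
    exact hx.subset (Function.support_smul_subset_right c x)

/-!
Every `x ∈ I` satisfies `x * e = x` for some `e ∈ I`, namely the indicator of the support of `x`.
This makes `R ⧸ I` flat: a relation `∑ fᵢ • [gᵢ] = 0` in `R ⧸ I` means `s = ∑ fᵢ gᵢ ∈ I`, and
choosing `e ∈ I` with `s e = s`, the lifts `gᵢ (1 - e)` of `[gᵢ]` satisfy the relation in `R` itself.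

If `R ⧸ I` were projective, the quotient map would split, and the image `c` of `1` under a splitting
satisfies `1 - c ∈ I` and `I * c = 0`. As `I` contains all `Pi.single n 1`, this forces `c = 0`,
hence `1 ∈ I`, which is absurd since `1` has infinite support.
-/

namespace Ideal

variable {R : Type*} [CommRing R] (I : Ideal R)

theorem flat_quotient_of_forall_exists_mul_eq_self (h : ∀ x ∈ I, ∃ e ∈ I, x * e = x) :
    Module.Flat R (R ⧸ I) := by
  rw [Module.Flat.iff_forall_isTrivialRelation]
  intro l f x hfx
  obtain ⟨g, rfl⟩ := (Quotient.mk_surjective (I := I)).comp_left x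
  have hs : ∑ i, f i * g i ∈ I := by
    rw [← Quotient.eq_zero_iff_mem, ← hfx]
    simp [Algebra.smul_def]
  obtain ⟨e, heI, hse⟩ := h _ hs
  refine ⟨1, fun i _ => g i * (1 - e), fun _ => 1, fun i => ?_, fun _ => ?_⟩
  · show Quotient.mk I (g i) = ∑ _ : Fin 1, (g i * (1 - e)) • (1 : R ⧸ I)
    rw [Fin.sum_univ_one, Algebra.smul_def, mul_one, Quotient.algebraMap_eq, Quotient.eq,
      mul_one_sub, sub_sub_cancel]
    exact I.mul_mem_left _ heI
  · calc ∑ i, f i * (g i * (1 - e)) = (∑ i, f i * g i) * (1 - e) := by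
          simp only [Finset.sum_mul, mul_assoc]
      _ = 0 := by rw [mul_one_sub, hse, sub_self]

theorem exists_one_sub_mem_and_mul_eq_zero_of_projective [Module.Projective R (R ⧸ I)] :
    ∃ c : R, 1 - c ∈ I ∧ ∀ a ∈ I, a * c = 0 := by
  obtain ⟨σ, hσ⟩ := Module.projective_lifting_property I.mkQ LinearMap.id I.mkQ_surjective
  refine ⟨σ 1, Quotient.eq.mp (LinearMap.congr_fun hσ 1).symm, fun a ha => ?_⟩
  have ha' : a • (1 : R ⧸ I) = 0 := by
    rw [Algebra.smul_def, mul_one, Quotient.algebraMap_eq, Quotient.eq_zero_iff_mem]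
    exact ha
  rw [← smul_eq_mul, ← map_smul, ha', map_zero]

end Ideal

section

variable {A : Type*} [CommRing A]

theorem mem_eventuallyZeroIdeal {x : ℕ → A} :
    x ∈ eventuallyZeroIdeal A ↔ (Function.support x).Finite := Iff.rfl

theorem single_mem_eventuallyZeroIdeal (n : ℕ) (a : A) :
    Pi.single n a ∈ eventuallyZeroIdeal A :=
  (Set.finite_singleton n).subset Pi.support_single_subset

theorem eq_zero_of_forall_mem_eventuallyZeroIdeal_mul_eq_zero {c : ℕ → A}
    (hc : ∀ a ∈ eventuallyZeroIdeal A, a * c = 0) : c = 0 := by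
  funext n
  simpa using congr_fun (hc _ (single_mem_eventuallyZeroIdeal n 1)) n

theorem one_notMem_eventuallyZeroIdeal [Nontrivial A] : (1 : ℕ → A) ∉ eventuallyZeroIdeal A := by
  rw [mem_eventuallyZeroIdeal, Function.support_one]
  exact Set.infinite_univ

theorem exists_mul_eq_self_of_mem_eventuallyZeroIdeal {x : ℕ → A} (hx : x ∈ eventuallyZeroIdeal A) :
    ∃ e ∈ eventuallyZeroIdeal A, x * e = x := by
  classical
  refine ⟨(Function.support x).indicator 1, hx.subset Set.support_indicator_subset, ?_⟩
  funext n
  by_cases hn : x n = 0 <;> simp [hn]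

end

/-- For `R` a countably infinite product of copies of a nonzero ring `A` and `I`
the ideal of eventually zero sequences, `R/I` is flat but not projective. -/
theorem quotient_flat_not_projective
    (A : Type*) [CommRing A] [Nontrivial A] :
    Module.Flat (ℕ → A) ((ℕ → A) ⧸ eventuallyZeroIdeal A) ∧
      ¬ Module.Projective (ℕ → A) ((ℕ → A) ⧸ eventuallyZeroIdeal A) := by
  refine ⟨Ideal.flat_quotient_of_forall_exists_mul_eq_self _
    fun _ => exists_mul_eq_self_of_mem_eventuallyZeroIdeal, fun _ => ?_⟩
  obtain ⟨c, hc1, hcI⟩ := (eventuallyZeroIdeal A).exists_one_sub_mem_and_mul_eq_zero_of_projective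
  rw [eq_zero_of_forall_mem_eventuallyZeroIdeal_mul_eq_zero hcI, sub_zero] at hc1
  exact one_notMem_eventuallyZeroIdeal hc1
end
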